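/- Let p, J ≥ 1, let Γ be a J×J symmetric positive definite real matrix, and let C be a (p+J)×(p+J) symmetric positive definite real matrix with block decomposition C = [[C^{θθ}, C^{θG}], [(C^{θG})ᵀ, C^{GG}]] where C^{θθ} is p×p and C^{GG} is J×J. Let H = [0 I_J] (the J×(p+J) matrix projecting onto the last J coordinates) and H^⊥ = [I_p 0]. For ψ = (ψ_θ, ψ_G) ∈ ℝ^{p+J} and y ∈ ℝ^J, consider the strictly convex objective J(v) = (1/2)(y − Hv)ᵀ Γ⁻¹ (y − Hv) + (1/2)(v − ψ)ᵀ C⁻¹ (v − ψ). Then J has a unique minimizer v* over ℝ^{p+J}, and its θ-component is given by the Kalman update formula H^⊥ v* = ψ_θ + C^{θG} (C^{GG} + Γ)⁻¹ (y − ψ_G). -/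

import Mathlib

/-! The minimizer is `v* = ψ + C Hᵀ (H C Hᵀ + Γ)⁻¹ (y − H ψ)`. Writing `u = (H C Hᵀ + Γ)⁻¹ (y − H ψ)`,
one has `C⁻¹ (v* − ψ) = Hᵀ u` and `y − H v* = Γ u`, so the gradient of `J` vanishes at `v*`;
as `J` is quadratic this gives the exact identity
`J w = J v* + ½ |H (w − v*)|²_Γ + ½ |w − v*|²_C`, whose last term is positive unless `w = v*`.
For `H = [0 I]` one has `H C Hᵀ = C^{GG}`, and the `θ`-rows of `C Hᵀ` form `C^{θG}`. -/

open Matrix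

/-- The EKI quadratic objective
`J(v) = ½ (y − Hv)ᵀ Γ⁻¹ (y − Hv) + ½ (v − ψ)ᵀ C⁻¹ (v − ψ)`, where
`H` projects onto the last `J` coordinates. -/
noncomputable def ekiObjective (p J : ℕ) (Γ : Matrix (Fin J) (Fin J) ℝ)
    (C : Matrix (Fin p ⊕ Fin J) (Fin p ⊕ Fin J) ℝ)
    (ψ : Fin p ⊕ Fin J → ℝ) (y : Fin J → ℝ)
    (v : Fin p ⊕ Fin J → ℝ) : ℝ :=
  (1 / 2) * ((fun j => y j - v (Sum.inr j)) ⬝ᵥ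
      (Γ⁻¹ *ᵥ fun j => y j - v (Sum.inr j)))
    + (1 / 2) * ((v - ψ) ⬝ᵥ (C⁻¹ *ᵥ (v - ψ)))

namespace Matrix

variable {n R : Type*} [Fintype n] [CommRing R]

theorem IsSymm.add_dotProduct_mulVec_add {A : Matrix n n R} (hA : A.IsSymm) (x d : n → R) :
    (x + d) ⬝ᵥ (A *ᵥ (x + d)) = x ⬝ᵥ (A *ᵥ x) + 2 * (d ⬝ᵥ (A *ᵥ x)) + d ⬝ᵥ (A *ᵥ d) := by
  have hcomm : x ⬝ᵥ (A *ᵥ d) = d ⬝ᵥ (A *ᵥ x) := by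
    simpa only [hA.eq] using dotProduct_transpose_mulVec A x d
  simp only [mulVec_add, dotProduct_add, add_dotProduct, hcomm]
  ring

variable [DecidableEq n]

theorem nonsing_inv_mulVec_mulVec {A : Matrix n n R} (hA : IsUnit A) (x : n → R) :
    A⁻¹ *ᵥ (A *ᵥ x) = x := by
  rw [mulVec_mulVec, nonsing_inv_mul _ ((isUnit_iff_isUnit_det A).mp hA), one_mulVec]

theorem mulVec_nonsing_inv_mulVec {A : Matrix n n R} (hA : IsUnit A) (x : n → R) :
    A *ᵥ (A⁻¹ *ᵥ x) = x := by
  rw [mulVec_mulVec, mul_nonsing_inv _ ((isUnit_iff_isUnit_det A).mp hA), one_mulVec]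

end Matrix

section KalmanUpdate

variable {m n : Type*} [Fintype m] [Fintype n] [DecidableEq m] [DecidableEq n]

noncomputable def kalmanObjective (H : Matrix m n ℝ) (Γ : Matrix m m ℝ) (C : Matrix n n ℝ)
    (ψ : n → ℝ) (y : m → ℝ) (v : n → ℝ) : ℝ :=
  (1 / 2) * ((y - H *ᵥ v) ⬝ᵥ (Γ⁻¹ *ᵥ (y - H *ᵥ v))) + (1 / 2) * ((v - ψ) ⬝ᵥ (C⁻¹ *ᵥ (v - ψ)))

noncomputable def kalmanUpdate (H : Matrix m n ℝ) (Γ : Matrix m m ℝ) (C : Matrix n n ℝ)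
    (ψ : n → ℝ) (y : m → ℝ) : n → ℝ :=
  ψ + C *ᵥ (Hᵀ *ᵥ ((H * C * Hᵀ + Γ)⁻¹ *ᵥ (y - H *ᵥ ψ)))

variable (H : Matrix m n ℝ) {Γ : Matrix m m ℝ} {C : Matrix n n ℝ} (ψ : n → ℝ) (y : m → ℝ)

theorem kalmanUpdate_stationary (hΓ : Γ.PosDef) (hC : C.PosDef) :
    C⁻¹ *ᵥ (kalmanUpdate H Γ C ψ y - ψ) =
      Hᵀ *ᵥ (Γ⁻¹ *ᵥ (y - H *ᵥ kalmanUpdate H Γ C ψ y)) := by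
  set S := H * C * Hᵀ + Γ
  set u := S⁻¹ *ᵥ (y - H *ᵥ ψ)
  have hS : S.PosDef := by
    have := hC.posSemidef.mul_mul_conjTranspose_same H
    rw [conjTranspose_eq_transpose_of_trivial] at this
    exact PosDef.posSemidef_add this hΓ
  have hu : (H * C * Hᵀ) *ᵥ u + Γ *ᵥ u = y - H *ᵥ ψ := by
    rw [← add_mulVec]
    exact mulVec_nonsing_inv_mulVec hS.isUnit _
  have hgain : kalmanUpdate H Γ C ψ y - ψ = C *ᵥ (Hᵀ *ᵥ u) := add_sub_cancel_left _ _
  clear_value u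
  have residual : y - H *ᵥ kalmanUpdate H Γ C ψ y = Γ *ᵥ u := by
    rw [← add_sub_cancel ψ (kalmanUpdate H Γ C ψ y), hgain, mulVec_add, ← sub_sub, ← hu,
      mulVec_mulVec, mulVec_mulVec, add_sub_cancel_left]
  rw [residual, hgain, nonsing_inv_mulVec_mulVec hΓ.isUnit, nonsing_inv_mulVec_mulVec hC.isUnit]

theorem kalmanObjective_eq_add (hΓ : Γ.PosDef) (hC : C.PosDef) (w : n → ℝ) :
    kalmanObjective H Γ C ψ y w = kalmanObjective H Γ C ψ y (kalmanUpdate H Γ C ψ y)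
      + (1 / 2) * ((H *ᵥ (w - kalmanUpdate H Γ C ψ y)) ⬝ᵥ
          (Γ⁻¹ *ᵥ (H *ᵥ (w - kalmanUpdate H Γ C ψ y))))
      + (1 / 2) * ((w - kalmanUpdate H Γ C ψ y) ⬝ᵥ (C⁻¹ *ᵥ (w - kalmanUpdate H Γ C ψ y))) := by
  have hstat := kalmanUpdate_stationary H ψ y hΓ hC
  set v := kalmanUpdate H Γ C ψ y
  set d := w - v
  have hres : y - H *ᵥ w = (y - H *ᵥ v) + -(H *ᵥ d) := by
    simp only [d, mulVec_sub]
    abel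
  have hdev : w - ψ = (v - ψ) + d := by
    simp only [d]
    abel
  have cross : d ⬝ᵥ (C⁻¹ *ᵥ (v - ψ)) = (H *ᵥ d) ⬝ᵥ (Γ⁻¹ *ᵥ (y - H *ᵥ v)) := by
    rw [hstat, dotProduct_transpose_mulVec, dotProduct_comm]
  rw [kalmanObjective, kalmanObjective, hres, hdev,
    (isHermitian_iff_isSymm.mp hΓ.inv.isHermitian).add_dotProduct_mulVec_add,
    (isHermitian_iff_isSymm.mp hC.inv.isHermitian).add_dotProduct_mulVec_add, cross,
    mulVec_neg, neg_dotProduct, dotProduct_neg, neg_dotProduct, neg_neg]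
  ring

theorem kalmanObjective_minimizer_iff (hΓ : Γ.PosDef) (hC : C.PosDef) (v : n → ℝ) :
    (∀ w, kalmanObjective H Γ C ψ y v ≤ kalmanObjective H Γ C ψ y w) ↔
      v = kalmanUpdate H Γ C ψ y := by
  have hJ := kalmanObjective_eq_add H ψ y hΓ hC
  have hΓq (x : m → ℝ) : 0 ≤ x ⬝ᵥ (Γ⁻¹ *ᵥ x) := by
    simpa using hΓ.inv.posSemidef.dotProduct_mulVec_nonneg x
  have hCq (x : n → ℝ) : 0 ≤ x ⬝ᵥ (C⁻¹ *ᵥ x) := by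
    simpa using hC.inv.posSemidef.dotProduct_mulVec_nonneg x
  constructor
  · intro hv
    by_contra hne
    have hpos : 0 < (v - kalmanUpdate H Γ C ψ y) ⬝ᵥ (C⁻¹ *ᵥ (v - kalmanUpdate H Γ C ψ y)) := by
      simpa using hC.inv.dotProduct_mulVec_pos (sub_ne_zero.mpr hne)
    have hle := hv (kalmanUpdate H Γ C ψ y)
    rw [hJ v] at hle
    linarith [hΓq (H *ᵥ (v - kalmanUpdate H Γ C ψ y))]
  · rintro rfl w
    rw [hJ w]
    linarith [hΓq (H *ᵥ (w - kalmanUpdate H Γ C ψ y)), hCq (w - kalmanUpdate H Γ C ψ y)]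

end KalmanUpdate

section ObservedBlock

variable {α β : Type*} [DecidableEq β]

variable (α β) in
def projInr : Matrix β (α ⊕ β) ℝ := fromCols 0 1

theorem projInr_transpose_mulVec [Fintype β] (u : β → ℝ) :
    (projInr α β)ᵀ *ᵥ u = Sum.elim (0 : α → ℝ) u := by
  ext (i | j) <;> simp [projInr, transpose_fromCols]

variable [Fintype α] [Fintype β]

theorem projInr_mulVec (v : α ⊕ β → ℝ) : projInr α β *ᵥ v = v ∘ Sum.inr := by
  simp [projInr]

theorem projInr_mul_mul_transpose (C : Matrix (α ⊕ β) (α ⊕ β) ℝ) :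
    projInr α β * C * (projInr α β)ᵀ = C.toBlocks₂₂ := by
  ext i j
  simp [projInr, mul_apply, fromCols, Fintype.sum_sum_type, one_apply, toBlocks₂₂]

omit [DecidableEq β] in
theorem mulVec_sumElim_zero_inl (C : Matrix (α ⊕ β) (α ⊕ β) ℝ) (u : β → ℝ) (i : α) :
    (C *ᵥ Sum.elim 0 u) (Sum.inl i) = (C.toBlocks₁₂ *ᵥ u) i := by
  simp [mulVec, dotProduct, Fintype.sum_sum_type, toBlocks₁₂]

theorem kalmanUpdate_projInr_inl (Γ : Matrix β β ℝ) (C : Matrix (α ⊕ β) (α ⊕ β) ℝ)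
    (ψ : α ⊕ β → ℝ) (y : β → ℝ) :
    (fun i => kalmanUpdate (projInr α β) Γ C ψ y (Sum.inl i)) =
      (fun i => ψ (Sum.inl i)) +
        C.toBlocks₁₂ *ᵥ ((C.toBlocks₂₂ + Γ)⁻¹ *ᵥ fun j => y j - ψ (Sum.inr j)) := by
  ext i
  simp only [kalmanUpdate, projInr_mul_mul_transpose, projInr_mulVec, projInr_transpose_mulVec,
    Pi.add_apply, mulVec_sumElim_zero_inl]
  rfl

end ObservedBlock

theorem ekiObjective_eq_kalmanObjective (p J : ℕ) (Γ : Matrix (Fin J) (Fin J) ℝ)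
    (C : Matrix (Fin p ⊕ Fin J) (Fin p ⊕ Fin J) ℝ) (ψ : Fin p ⊕ Fin J → ℝ) (y : Fin J → ℝ) :
    ekiObjective p J Γ C ψ y = kalmanObjective (projInr (Fin p) (Fin J)) Γ C ψ y := by
  ext v
  rw [kalmanObjective, projInr_mulVec]
  rfl

theorem eki_minimizer_kalman_update_general (p J : ℕ)
    (Γ : Matrix (Fin J) (Fin J) ℝ) (hΓ : Γ.PosDef)
    (C : Matrix (Fin p ⊕ Fin J) (Fin p ⊕ Fin J) ℝ) (hC : C.PosDef)
    (ψ : Fin p ⊕ Fin J → ℝ) (y : Fin J → ℝ) :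
    (∃! v : Fin p ⊕ Fin J → ℝ,
        ∀ w : Fin p ⊕ Fin J → ℝ,
          ekiObjective p J Γ C ψ y v ≤ ekiObjective p J Γ C ψ y w) ∧
      ∀ v : Fin p ⊕ Fin J → ℝ,
        (∀ w : Fin p ⊕ Fin J → ℝ,
          ekiObjective p J Γ C ψ y v ≤ ekiObjective p J Γ C ψ y w) →
        (fun i => v (Sum.inl i)) =
          (fun i => ψ (Sum.inl i)) +
            C.toBlocks₁₂ *ᵥ ((C.toBlocks₂₂ + Γ)⁻¹ *ᵥ
              fun j => y j - ψ (Sum.inr j)) := by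
  have hmin := kalmanObjective_minimizer_iff (projInr (Fin p) (Fin J)) ψ y hΓ hC
  rw [ekiObjective_eq_kalmanObjective]
  refine ⟨⟨_, (hmin _).2 rfl, fun v hv => (hmin v).1 hv⟩, fun v hv => ?_⟩
  rw [(hmin v).1 hv, kalmanUpdate_projInr_inl]

/-- The EKI objective has a unique minimizer, whose `θ`-component is given by
the Kalman update formula
`H^⊥ v* = ψ_θ + C^{θG} (C^{GG} + Γ)⁻¹ (y − ψ_G)`. -/
theorem eki_minimizer_kalman_update (p J : ℕ) (hp : 1 ≤ p) (hJ : 1 ≤ J)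
    (Γ : Matrix (Fin J) (Fin J) ℝ) (hΓ : Γ.PosDef)
    (C : Matrix (Fin p ⊕ Fin J) (Fin p ⊕ Fin J) ℝ) (hC : C.PosDef)
    (ψ : Fin p ⊕ Fin J → ℝ) (y : Fin J → ℝ) :
    (∃! v : Fin p ⊕ Fin J → ℝ,
        ∀ w : Fin p ⊕ Fin J → ℝ,
          ekiObjective p J Γ C ψ y v ≤ ekiObjective p J Γ C ψ y w) ∧
      ∀ v : Fin p ⊕ Fin J → ℝ,
        (∀ w : Fin p ⊕ Fin J → ℝ,
          ekiObjective p J Γ C ψ y v ≤ ekiObjective p J Γ C ψ y w) →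
        (fun i => v (Sum.inl i)) =
          (fun i => ψ (Sum.inl i)) +
            C.toBlocks₁₂ *ᵥ ((C.toBlocks₂₂ + Γ)⁻¹ *ᵥ
              fun j => y j - ψ (Sum.inr j)) :=
  eki_minimizer_kalman_update_general p J Γ hΓ C hC ψ y
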